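/- arXiv:2310.02604 — 3 statements merged into one kernel-verified Lean document; each statement's English description precedes it below -/
import Mathlib

section
/- Let A₁ = [1, −1] and A₂ = [−1, 1] be 1×2 payoff matrices (so n = 1, m = 2), and consider the 6×6 OGDA iterative matrices for the period-2 game. For every step size η > 0, the one-period product Ã = M_OGDA(A₂, A₁)·M_OGDA(A₁, A₂) has 4η² + (1/2)√(64η⁴ + 8η² + 1) + 1/2 as an eigenvalue; this number is strictly greater than 1, so the spectral radius of Ã is strictly greater than 1. -/
open Matrix

/-- The OGDA iterative matrix
`M_OGDA(A, A') = [[I, −2ηA, 0, ηA'], [2ηAᵀ, I, −ηA'ᵀ, 0], [I, 0, 0, 0], [0, I, 0, 0]]`. -/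
noncomputable def MOGDA {n m : ℕ} (η : ℝ) (A A' : Matrix (Fin n) (Fin m) ℝ) :
    Matrix ((Fin n ⊕ Fin m) ⊕ (Fin n ⊕ Fin m)) ((Fin n ⊕ Fin m) ⊕ (Fin n ⊕ Fin m)) ℝ :=
  fromBlocks
    (fromBlocks 1 ((-(2 * η)) • A) ((2 * η) • Aᵀ) 1)
    (fromBlocks 0 (η • A') ((-η) • A'ᵀ) 0)
    1 0

/-- `μ : ℂ` is an eigenvalue of the real matrix `M`. -/
def IsEig {d : Type*} [Fintype d] (M : Matrix d d ℝ) (μ : ℂ) : Prop :=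
  ∃ v : d → ℂ, v ≠ 0 ∧ (M.map (fun x : ℝ => (x : ℂ))).mulVec v = μ • v

/-- `A₁ = [1, −1]`. -/
noncomputable def A1 : Matrix (Fin 1) (Fin 2) ℝ := !![1, -1]

/-- `A₂ = [−1, 1]`. -/
noncomputable def A2 : Matrix (Fin 1) (Fin 2) ℝ := !![-1, 1]

/-!
Write `S` for the skew block matrix `[[0, A₁], [-A₁ᵀ, 0]]`, so that `M_OGDA(A₁, A₂)` and
`M_OGDA(A₂, A₁)` are `[[1 - 2ηS, -ηS], [1, 0]]` and `[[1 + 2ηS, ηS], [1, 0]]`, and their product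
is `[[1 + ηS - 4η²S², -ηS - 2η²S²], [1 - 2ηS, -ηS]]`. On the plane spanned by `e₀` and `S e₀`
one has `S² = -2`, so there `Ã` acts as a `2 × 2` matrix over `ℝ[S]/(S² + 2) ≅ ℂ` whose
characteristic polynomial `μ² - (1 + 8η²)μ + 2η²` happens to be real. Each real root `μ` is
therefore an eigenvalue of `Ã` with a real eigenvector.
-/

theorem isEig_of_mulVec_eq_smul {d : Type*} [Fintype d] {M : Matrix d d ℝ} {μ : ℝ} {v : d → ℝ}
    (hv : v ≠ 0) (h : M *ᵥ v = μ • v) : IsEig M μ := by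
  refine ⟨fun i => (v i : ℂ), fun h0 => hv (funext fun i => ?_), funext fun i => ?_⟩
  · exact Complex.ofReal_eq_zero.mp (congrFun h0 i)
  · have := (Complex.ofRealHom.map_mulVec M v i).symm
    simp only [h, Pi.smul_apply, smul_eq_mul, map_mul, Complex.ofRealHom_eq_coe] at this
    exact this

/-- The vector `((μ - 4η²) e₀ + η(2μ + 1) S e₀, (1 + 8η²) e₀)`. -/
noncomputable def periodEigenvector (η μ : ℝ) : (Fin 1 ⊕ Fin 2) ⊕ (Fin 1 ⊕ Fin 2) → ℝ :=
  Sum.elim (Sum.elim ![μ - 4 * η ^ 2] ![-(η * (2 * μ + 1)), η * (2 * μ + 1)])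
    (Sum.elim ![1 + 8 * η ^ 2] ![0, 0])

theorem periodEigenvector_ne_zero (η μ : ℝ) : periodEigenvector η μ ≠ 0 := by
  intro h
  have h0 := congrFun h (Sum.inr (Sum.inl 0))
  simp only [periodEigenvector, Sum.elim_inr, Sum.elim_inl, cons_val_zero, Pi.zero_apply] at h0
  linarith [sq_nonneg η]

theorem mulVec_periodEigenvector (η μ : ℝ) (hμ : μ ^ 2 = (1 + 8 * η ^ 2) * μ - 2 * η ^ 2) :
    (MOGDA η A2 A1 * MOGDA η A1 A2) *ᵥ periodEigenvector η μ = μ • periodEigenvector η μ := by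
  rw [← mulVec_mulVec]
  ext ((i | i) | (i | i)) <;> fin_cases i <;>
    simp [mulVec, dotProduct, Fintype.sum_sum_type, Fin.sum_univ_succ, MOGDA,
      A1, A2, periodEigenvector, one_apply]
  · linear_combination -hμ
  · linear_combination 2 * η * hμ
  · linear_combination -2 * η * hμ
  all_goals ring

noncomputable def periodEigenvalue (η : ℝ) : ℝ :=
  4 * η ^ 2 + (1 / 2) * Real.sqrt (64 * η ^ 4 + 8 * η ^ 2 + 1) + 1 / 2

theorem periodEigenvalue_sq (η : ℝ) : periodEigenvalue η ^ 2 = (1 + 8 * η ^ 2) * periodEigenvalue η - 2 * η ^ 2 := by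
  have hs := Real.sq_sqrt (by positivity : (0 : ℝ) ≤ 64 * η ^ 4 + 8 * η ^ 2 + 1)
  unfold periodEigenvalue
  linear_combination (1 / 4 : ℝ) * hs

theorem one_lt_periodEigenvalue {η : ℝ} (hη : η ≠ 0) : 1 < periodEigenvalue η := by
  have hpos : 0 < 64 * η ^ 4 + 8 * η ^ 2 := by positivity
  have hs : 1 < Real.sqrt (64 * η ^ 4 + 8 * η ^ 2 + 1) := Real.lt_sqrt_of_sq_lt (by linarith)
  unfold periodEigenvalue
  linarith [sq_nonneg η]

/-- For every step size `η > 0`, the one-period product `Ã = M_OGDA(A₂, A₁)·M_OGDA(A₁, A₂)`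
of the OGDA iterative matrices for the period-2 game `A₁ = [1,−1]`, `A₂ = [−1,1]` has the real
number `4η² + (1/2)√(64η⁴ + 8η² + 1) + 1/2` as an eigenvalue; this number is `> 1`, so the
spectral radius of `Ã` is `> 1`. -/
theorem stmt15 (η : ℝ) (hη : 0 < η) :
    IsEig (MOGDA η A2 A1 * MOGDA η A1 A2)
        (((4 * η ^ 2 + (1 / 2) * Real.sqrt (64 * η ^ 4 + 8 * η ^ 2 + 1) + 1 / 2 : ℝ) : ℂ)) ∧
    1 < 4 * η ^ 2 + (1 / 2) * Real.sqrt (64 * η ^ 4 + 8 * η ^ 2 + 1) + 1 / 2 ∧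
    ∃ μ : ℂ, IsEig (MOGDA η A2 A1 * MOGDA η A1 A2) μ ∧ 1 < ‖μ‖ := by
  have heig : IsEig (MOGDA η A2 A1 * MOGDA η A1 A2) (periodEigenvalue η) :=
    isEig_of_mulVec_eq_smul (periodEigenvector_ne_zero η _)
      (mulVec_periodEigenvector η _ (periodEigenvalue_sq η))
  have hgt : 1 < periodEigenvalue η := one_lt_periodEigenvalue hη.ne'
  refine ⟨heig, hgt, _, heig, ?_⟩
  rwa [Complex.norm_real, Real.norm_of_nonneg (by linarith)]
end

section
/- Let A ∈ ℝ^{n×n} be an invertible square payoff matrix with largest singular value σ, let {B_t} ⊂ ℝ^{n×n} satisfy lim_{t→∞} B_t = 0, and let the EG step sizes satisfy α = γ < 1/(2σ). Then the EG iterates X_{t+1} = M_EG(A + B_t) X_t, X_t = (x_t, y_t) ∈ ℝ^{2n}, converge to 0 at an exponential rate: there exist ρ ∈ (0,1) and C > 0 such that ‖X_t‖₂ ≤ C ρ^t for all t; in particular lim_{t→∞} (x_t, y_t) = (0, 0). -/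
open Matrix Filter

/-- Euclidean norm of a real vector. -/
noncomputable def vnorm2 {ι : Type*} [Fintype ι] (v : ι → ℝ) : ℝ :=
  Real.sqrt (∑ i, v i ^ 2)

/-- Spectral (operator 2-)norm of a real matrix; this is also its largest singular value. -/
noncomputable def mnorm2 {ι κ : Type*} [Fintype ι] [Fintype κ] [DecidableEq κ]
    (M : Matrix ι κ ℝ) : ℝ :=
  ‖LinearMap.toContinuousLinearMap (Matrix.toEuclideanLin M)‖

/-- The extra-gradient (EG) iterative matrix
`M_EG(A) = [[I − αγ A Aᵀ, −α A], [α Aᵀ, I − αγ Aᵀ A]]`. -/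
noncomputable def MEG {n m : ℕ} (α γ : ℝ) (A : Matrix (Fin n) (Fin m) ℝ) :
    Matrix (Fin n ⊕ Fin m) (Fin n ⊕ Fin m) ℝ :=
  fromBlocks (1 - (α * γ) • (A * Aᵀ)) ((-α) • A) (α • Aᵀ) (1 - (α * γ) • (Aᵀ * A))

/-!
With `α = γ`, `M_EG(A) = I + αJ + α²J²` for the skew-symmetric `J = [[0, -A], [Aᵀ, 0]]`.
Skew-symmetry kills the cross terms, so `‖M z‖² = ‖z‖² - α²‖Jz‖² + α⁴‖J²z‖²`, and `α‖J‖ ≤ 1/2`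
turns this into `‖M z‖² ≤ ‖z‖² - (3/4) α² ‖Jz‖²`. Invertibility of `A` bounds `‖Jz‖` below by a
multiple of `‖z‖`, hence `‖M_EG(A)‖₂ < 1`. The spectral norm is continuous, so
`‖M_EG(A + B_t)‖₂` eventually stays below some `ρ < 1`, which gives geometric decay.
-/

open scoped Matrix.Norms.L2Operator

section Norms

variable {ι κ : Type*} [Fintype ι] [Fintype κ]

lemma vnorm2_nonneg (v : ι → ℝ) : 0 ≤ vnorm2 v := Real.sqrt_nonneg _

lemma vnorm2_sq (v : ι → ℝ) : vnorm2 v ^ 2 = v ⬝ᵥ v := by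
  rw [vnorm2, Real.sq_sqrt (by positivity)]
  simp only [dotProduct, sq]

lemma vnorm2_eq_norm (v : ι → ℝ) : vnorm2 v = ‖(EuclideanSpace.equiv ι ℝ).symm v‖ := by
  simp [vnorm2, EuclideanSpace.norm_eq]

lemma vnorm2_neg (v : ι → ℝ) : vnorm2 (-v) = vnorm2 v := by
  simp [vnorm2]

lemma vnorm2_sq_sum (z : ι ⊕ κ → ℝ) :
    vnorm2 z ^ 2 = vnorm2 (z ∘ Sum.inl) ^ 2 + vnorm2 (z ∘ Sum.inr) ^ 2 := by
  simp only [vnorm2_sq, dotProduct, Fintype.sum_sum_type, Function.comp_apply]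

variable [DecidableEq κ]

lemma mnorm2_eq_norm (M : Matrix ι κ ℝ) : mnorm2 M = ‖M‖ := rfl

lemma mnorm2_nonneg (M : Matrix ι κ ℝ) : 0 ≤ mnorm2 M := norm_nonneg M

lemma continuous_mnorm2 : Continuous (mnorm2 : Matrix ι κ ℝ → ℝ) := continuous_norm

lemma vnorm2_mulVec_le (M : Matrix ι κ ℝ) (v : κ → ℝ) :
    vnorm2 (M *ᵥ v) ≤ mnorm2 M * vnorm2 v := by
  rw [vnorm2_eq_norm, vnorm2_eq_norm]
  exact M.l2_opNorm_mulVec _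

lemma mnorm2_le_of_forall_vnorm2_mulVec_le (M : Matrix ι κ ℝ) {r : ℝ} (hr : 0 ≤ r)
    (h : ∀ v, vnorm2 (M *ᵥ v) ≤ r * vnorm2 v) : mnorm2 M ≤ r :=
  ContinuousLinearMap.opNorm_le_bound _ hr fun w => by
    have hw := h w.ofLp
    rw [vnorm2_eq_norm, vnorm2_eq_norm] at hw
    exact hw

lemma mnorm2_transpose [DecidableEq ι] (M : Matrix ι κ ℝ) : mnorm2 Mᵀ = mnorm2 M := by
  rw [mnorm2_eq_norm, mnorm2_eq_norm, ← conjTranspose_eq_transpose_of_trivial,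
    l2_opNorm_conjTranspose]

lemma exists_pos_mul_vnorm2_le_vnorm2_mulVec {M : Matrix ι κ ℝ} {K : Matrix κ ι ℝ}
    [DecidableEq ι] (hKM : K * M = 1) : ∃ c > 0, ∀ v, c * vnorm2 v ≤ vnorm2 (M *ᵥ v) := by
  have hK := mnorm2_nonneg K
  refine ⟨(mnorm2 K + 1)⁻¹, by positivity, fun v => ?_⟩
  have hv : vnorm2 v ≤ mnorm2 K * vnorm2 (M *ᵥ v) := by
    simpa only [mulVec_mulVec, hKM, one_mulVec] using vnorm2_mulVec_le K (M *ᵥ v)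
  rw [inv_mul_le_iff₀ (by positivity)]
  nlinarith [vnorm2_nonneg (M *ᵥ v)]

end Norms

section Skew

variable {ι : Type*} [Fintype ι] {J : Matrix ι ι ℝ}

lemma dotProduct_mulVec_of_transpose_eq_neg (hJ : Jᵀ = -J) (u w : ι → ℝ) :
    u ⬝ᵥ (J *ᵥ w) = -((J *ᵥ u) ⬝ᵥ w) := by
  rw [dotProduct_mulVec, ← mulVec_transpose, hJ, neg_mulVec, neg_dotProduct]

lemma dotProduct_mulVec_self_of_transpose_eq_neg (hJ : Jᵀ = -J) (v : ι → ℝ) :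
    v ⬝ᵥ (J *ᵥ v) = 0 := by
  have h := dotProduct_mulVec_of_transpose_eq_neg hJ v v
  rw [dotProduct_comm (J *ᵥ v)] at h
  linarith

variable [DecidableEq ι]

lemma vnorm2_sq_mulVec_eg_of_transpose_eq_neg (hJ : Jᵀ = -J) (α : ℝ) (v : ι → ℝ) :
    vnorm2 ((1 + α • J + (α * α) • (J * J)) *ᵥ v) ^ 2
      = vnorm2 v ^ 2 - α ^ 2 * vnorm2 (J *ᵥ v) ^ 2 + α ^ 4 * vnorm2 (J *ᵥ (J *ᵥ v)) ^ 2 := by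
  set u := J *ᵥ v
  have hw : (1 + α • J + (α * α) • (J * J)) *ᵥ v = v + α • u + (α * α) • (J *ᵥ u) := by
    simp only [u, add_mulVec, one_mulVec, smul_mulVec, mulVec_mulVec]
  have hvu : v ⬝ᵥ u = 0 := dotProduct_mulVec_self_of_transpose_eq_neg hJ v
  have huJu : u ⬝ᵥ (J *ᵥ u) = 0 := dotProduct_mulVec_self_of_transpose_eq_neg hJ u
  have hvJu : v ⬝ᵥ (J *ᵥ u) = -(u ⬝ᵥ u) := dotProduct_mulVec_of_transpose_eq_neg hJ v u
  simp only [hw, vnorm2_sq, add_dotProduct, dotProduct_add, smul_dotProduct, dotProduct_smul,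
    smul_eq_mul, dotProduct_comm u v, dotProduct_comm (J *ᵥ u) v, dotProduct_comm (J *ᵥ u) u,
    hvu, huJu, hvJu]
  ring

lemma vnorm2_sq_mulVec_eg_le (hJ : Jᵀ = -J) {α c : ℝ} (hα : 0 < α)
    (hαJ : 2 * α * mnorm2 J ≤ 1) (hc : ∀ v, c * vnorm2 v ≤ vnorm2 (J *ᵥ v)) (hc0 : 0 ≤ c)
    (v : ι → ℝ) :
    vnorm2 ((1 + α • J + (α * α) • (J * J)) *ᵥ v) ^ 2
      ≤ (1 - 3 / 4 * α ^ 2 * c ^ 2) * vnorm2 v ^ 2 := by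
  set u := J *ᵥ v
  have hα2 : α ^ 2 * mnorm2 J ^ 2 ≤ 1 / 4 := by
    nlinarith [mul_nonneg hα.le (mnorm2_nonneg J)]
  have hJu : vnorm2 (J *ᵥ u) ^ 2 ≤ mnorm2 J ^ 2 * vnorm2 u ^ 2 := by
    rw [← mul_pow]
    exact pow_le_pow_left₀ (vnorm2_nonneg _) (vnorm2_mulVec_le J u) 2
  have hu : c ^ 2 * vnorm2 v ^ 2 ≤ vnorm2 u ^ 2 := by
    rw [← mul_pow]
    exact pow_le_pow_left₀ (by positivity [vnorm2_nonneg v]) (hc v) 2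
  rw [vnorm2_sq_mulVec_eg_of_transpose_eq_neg hJ]
  nlinarith [mul_le_mul_of_nonneg_left hJu (by positivity : (0 : ℝ) ≤ α ^ 4),
    mul_le_mul_of_nonneg_right hα2 (mul_nonneg (sq_nonneg α) (sq_nonneg (vnorm2 u))),
    mul_le_mul_of_nonneg_left hu (sq_nonneg α)]

lemma mnorm2_eg_lt_one (hJ : Jᵀ = -J)
    {K : Matrix ι ι ℝ} (hKJ : K * J = 1) {α : ℝ} (hα : 0 < α) (hαJ : 2 * α * mnorm2 J ≤ 1) :
    mnorm2 (1 + α • J + (α * α) • (J * J)) < 1 := by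
  obtain ⟨c, hc0, hc⟩ := exists_pos_mul_vnorm2_le_vnorm2_mulVec hKJ
  have hαc : 0 < α ^ 2 * c ^ 2 := by positivity
  calc mnorm2 (1 + α • J + (α * α) • (J * J)) ≤ Real.sqrt (1 - 3 / 4 * α ^ 2 * c ^ 2) := by
        refine mnorm2_le_of_forall_vnorm2_mulVec_le _ (Real.sqrt_nonneg _) fun v => ?_
        rw [← Real.sqrt_sq (vnorm2_nonneg _), ← Real.sqrt_sq (vnorm2_nonneg v),
          ← Real.sqrt_mul' _ (sq_nonneg _)]
        exact Real.sqrt_le_sqrt (vnorm2_sq_mulVec_eg_le hJ hα hαJ hc hc0.le v)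
    _ < 1 := by rw [Real.sqrt_lt' one_pos]; linarith

end Skew

section Game

variable {n m : ℕ}

def skewBlock (A : Matrix (Fin n) (Fin m) ℝ) : Matrix (Fin n ⊕ Fin m) (Fin n ⊕ Fin m) ℝ :=
  fromBlocks 0 (-A) Aᵀ 0

lemma skewBlock_transpose (A : Matrix (Fin n) (Fin m) ℝ) : (skewBlock A)ᵀ = -skewBlock A := by
  simp [skewBlock, fromBlocks_transpose, fromBlocks_neg]

lemma MEG_self_eq (α : ℝ) (A : Matrix (Fin n) (Fin m) ℝ) :
    MEG α α A = 1 + α • skewBlock A + (α * α) • (skewBlock A * skewBlock A) := by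
  simp only [MEG, skewBlock, fromBlocks_multiply, ← fromBlocks_one, fromBlocks_smul, fromBlocks_add]
  congr 1 <;> simp [sub_eq_add_neg, Matrix.mul_neg, Matrix.neg_mul]

lemma mnorm2_skewBlock_le (A : Matrix (Fin n) (Fin m) ℝ) : mnorm2 (skewBlock A) ≤ mnorm2 A := by
  refine mnorm2_le_of_forall_vnorm2_mulVec_le _ (mnorm2_nonneg A) fun z => ?_
  have hx := pow_le_pow_left₀ (vnorm2_nonneg _) (vnorm2_mulVec_le Aᵀ (z ∘ Sum.inl)) 2
  have hy := pow_le_pow_left₀ (vnorm2_nonneg _) (vnorm2_mulVec_le A (z ∘ Sum.inr)) 2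
  rw [mnorm2_transpose] at hx
  rw [← pow_le_pow_iff_left₀ (vnorm2_nonneg _)
    (mul_nonneg (mnorm2_nonneg A) (vnorm2_nonneg z)) two_ne_zero, mul_pow, vnorm2_sq_sum,
    vnorm2_sq_sum z]
  simp only [skewBlock, fromBlocks_mulVec, zero_mulVec, zero_add, add_zero, neg_mulVec,
    Sum.elim_comp_inl, Sum.elim_comp_inr, vnorm2_neg]
  nlinarith

lemma fromBlocks_inv_mul_skewBlock {A : Matrix (Fin n) (Fin n) ℝ} (hA : IsUnit A.det) :
    fromBlocks 0 A⁻¹ᵀ (-A⁻¹) 0 * skewBlock A = 1 := by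
  rw [skewBlock, fromBlocks_multiply, ← fromBlocks_one]
  simp [← transpose_mul, mul_nonsing_inv A hA, nonsing_inv_mul A hA]

lemma mnorm2_MEG_lt_one {A : Matrix (Fin n) (Fin n) ℝ} (hA : IsUnit A.det) {α : ℝ} (hα : 0 < α)
    (hαA : 2 * α * mnorm2 A ≤ 1) : mnorm2 (MEG α α A) < 1 := by
  rw [MEG_self_eq]
  refine mnorm2_eg_lt_one (skewBlock_transpose A) (fromBlocks_inv_mul_skewBlock hA) hα ?_
  nlinarith [mnorm2_skewBlock_le A]

lemma continuous_MEG (α γ : ℝ) : Continuous (MEG α γ : Matrix (Fin n) (Fin m) ℝ → _) := by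
  unfold MEG
  fun_prop

end Game

lemma exists_le_mul_pow_of_eventually_le_mul {u : ℕ → ℝ} {ρ : ℝ} (hρ : 0 < ρ)
    (h : ∀ᶠ t in atTop, u (t + 1) ≤ ρ * u t) : ∃ C > 0, ∀ t, u t ≤ C * ρ ^ t := by
  obtain ⟨N, hN⟩ := eventually_atTop.mp h
  set C := 1 + ∑ t ∈ Finset.range (N + 1), |u t| / ρ ^ t
  have hC : ∀ t ≤ N, |u t| / ρ ^ t ≤ C := fun t ht => by
    have := Finset.single_le_sum (f := fun t => |u t| / ρ ^ t) (fun t _ => by positivity)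
      (Finset.mem_range.mpr (Nat.lt_succ_of_le ht))
    linarith
  have hinit : ∀ t ≤ N, u t ≤ C * ρ ^ t := fun t ht =>
    (le_abs_self _).trans ((div_le_iff₀ (by positivity)).mp (hC t ht))
  refine ⟨C, by positivity, fun t => ?_⟩
  rcases le_total t N with ht | ht
  · exact hinit t ht
  induction t, ht using Nat.le_induction with
  | base => exact hinit N le_rfl
  | succ t ht ih =>
    calc u (t + 1) ≤ ρ * u t := hN t ht
      _ ≤ ρ * (C * ρ ^ t) := by gcongr
      _ = C * ρ ^ (t + 1) := by ring

/-- If the stable payoff matrix `A` is an invertible square matrix (with largest singular value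
`σ = ‖A‖₂`), `B_t → 0`, and the EG step sizes satisfy `α = γ < 1/(2σ)`, then the EG iterates
`X_{t+1} = M_EG(A + B_t) X_t` converge to `0` at an exponential rate: `‖X_t‖₂ ≤ C·ρ^t` for some
`ρ ∈ (0,1)`, `C > 0`; in particular `(x_t, y_t) → (0, 0)`. -/
theorem stmt16 {n : ℕ} (A : Matrix (Fin n) (Fin n) ℝ) (hA : IsUnit A.det)
    (B : ℕ → Matrix (Fin n) (Fin n) ℝ) (hB : Tendsto B atTop (nhds 0))
    (α γ : ℝ) (hα : 0 < α) (hαγ : α = γ) (hstep : α < 1 / (2 * mnorm2 A))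
    (X : ℕ → ((Fin n ⊕ Fin n) → ℝ))
    (hX : ∀ t, X (t + 1) = (MEG α γ (A + B t)).mulVec (X t)) :
    ∃ ρ ∈ Set.Ioo (0 : ℝ) 1, ∃ C > (0 : ℝ),
      (∀ t : ℕ, vnorm2 (X t) ≤ C * ρ ^ t) ∧
      Tendsto (fun t => vnorm2 (X t)) atTop (nhds 0) := by
  subst hαγ
  have hαA : 2 * α * mnorm2 A < 1 := by
    rcases (mnorm2_nonneg A).eq_or_lt with hA0 | hA0
    · simp [← hA0]
    · have := (lt_div_iff₀ (by positivity)).mp hstep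
      linarith
  obtain ⟨ρ, hMρ, hρ1⟩ := exists_between (mnorm2_MEG_lt_one hA hα hαA.le)
  have hρ : ρ ∈ Set.Ioo (0 : ℝ) 1 := ⟨(mnorm2_nonneg _).trans_lt hMρ, hρ1⟩
  have hMt : Tendsto (fun t => mnorm2 (MEG α α (A + B t))) atTop (nhds (mnorm2 (MEG α α A))) :=
    ((continuous_mnorm2.comp (continuous_MEG α α)).tendsto A).comp
      (by simpa using tendsto_const_nhds.add hB)
  have hdecay : ∀ᶠ t in atTop, vnorm2 (X (t + 1)) ≤ ρ * vnorm2 (X t) := by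
    filter_upwards [hMt.eventually_lt_const hMρ] with t ht
    rw [hX t]
    exact (vnorm2_mulVec_le _ _).trans (mul_le_mul_of_nonneg_right ht.le (vnorm2_nonneg _))
  obtain ⟨C, hC, hXC⟩ :=
    exists_le_mul_pow_of_eventually_le_mul (u := fun t => vnorm2 (X t)) hρ.1 hdecay
  refine ⟨ρ, hρ, C, hC, hXC, squeeze_zero (fun t => vnorm2_nonneg _) hXC ?_⟩
  simpa using (tendsto_pow_atTop_nhds_zero_of_lt_one hρ.1.le hρ.2).const_mul C
end

section
/- Let A, B ∈ ℝ^{n×m} and let α, γ > 0. Then the EG iterative matrices satisfy the perturbation bound ‖M_EG(A + B) − M_EG(A)‖₂ ≤ α·(2γ(2‖A‖₂ + ‖B‖₂) + 2)·‖B‖₂. Consequently, if {B_t} ⊂ ℝ^{n×m} satisfies Σ_{t=0}^∞ ‖B_t‖₂ < ∞, then Σ_{t=0}^∞ ‖M_EG(A + B_t) − M_EG(A)‖₂ < ∞. -/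
open Matrix

section Aux

open scoped Matrix.Norms.L2Operator

variable {n m : ℕ}

lemma mnorm2_eq {ι κ : Type*} [Fintype ι] [Fintype κ] [DecidableEq κ]
    (M : Matrix ι κ ℝ) : mnorm2 M = ‖M‖ := rfl

noncomputable def Pl (n m : ℕ) : Matrix (Fin n ⊕ Fin m) (Fin n) ℝ :=
  of fun i j => if i = Sum.inl j then 1 else 0

noncomputable def Pr (n m : ℕ) : Matrix (Fin n ⊕ Fin m) (Fin m) ℝ :=
  of fun i j => if i = Sum.inr j then 1 else 0

lemma Pl_tmul : (Pl n m)ᵀ * Pl n m = 1 := by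
  ext j k
  simp [Pl, mul_apply, Fintype.sum_sum_type, one_apply, Finset.sum_ite_eq, eq_comm]

lemma Pr_tmul : (Pr n m)ᵀ * Pr n m = 1 := by
  ext j k
  simp [Pr, mul_apply, Fintype.sum_sum_type, one_apply, Finset.sum_ite_eq, eq_comm]

lemma blocks_decomp (a : Matrix (Fin n) (Fin n) ℝ) (b : Matrix (Fin n) (Fin m) ℝ)
    (c : Matrix (Fin m) (Fin n) ℝ) (d : Matrix (Fin m) (Fin m) ℝ) :
    fromBlocks a b c d =
      Pl n m * a * (Pl n m)ᵀ + Pl n m * b * (Pr n m)ᵀ +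
      Pr n m * c * (Pl n m)ᵀ + Pr n m * d * (Pr n m)ᵀ := by
  ext i j
  cases i <;> cases j <;>
    simp [Pl, Pr, mul_apply, Fintype.sum_sum_type, fromBlocks, Finset.sum_ite_eq]

lemma norm_one_le_matrix : ‖(1 : Matrix (Fin n) (Fin n) ℝ)‖ ≤ 1 := by
  rw [Matrix.cstar_norm_def, _root_.map_one]
  exact ContinuousLinearMap.norm_id_le

lemma norm_Pl_le : ‖Pl n m‖ ≤ 1 := by
  have h : (Pl n m)ᴴ = (Pl n m)ᵀ := by ext i j; simp [conjTranspose_apply]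
  have := Matrix.l2_opNorm_conjTranspose_mul_self (Pl n m)
  rw [h, Pl_tmul] at this
  nlinarith [norm_nonneg (Pl n m), norm_one_le_matrix (n := n)]

lemma norm_Pr_le : ‖Pr n m‖ ≤ 1 := by
  have h : (Pr n m)ᴴ = (Pr n m)ᵀ := by ext i j; simp [conjTranspose_apply]
  have := Matrix.l2_opNorm_conjTranspose_mul_self (Pr n m)
  rw [h, Pr_tmul] at this
  nlinarith [norm_nonneg (Pr n m), norm_one_le_matrix (n := m)]

lemma l2norm_transpose {ι κ : Type*} [Fintype ι] [Fintype κ] [DecidableEq κ] [DecidableEq ι]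
    (M : Matrix ι κ ℝ) : ‖Mᵀ‖ = ‖M‖ := by
  have h : Mᵀ = Mᴴ := by ext i j; simp [conjTranspose_apply]
  rw [h, Matrix.l2_opNorm_conjTranspose]

lemma sandwich_le {p q : ℕ} (P : Matrix (Fin n ⊕ Fin m) (Fin p) ℝ)
    (Q : Matrix (Fin n ⊕ Fin m) (Fin q) ℝ) (a : Matrix (Fin p) (Fin q) ℝ)
    (hP : ‖P‖ ≤ 1) (hQ : ‖Q‖ ≤ 1) : ‖P * a * Qᵀ‖ ≤ ‖a‖ := by
  calc ‖P * a * Qᵀ‖ ≤ ‖P * a‖ * ‖Qᵀ‖ := Matrix.l2_opNorm_mul _ _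
    _ ≤ ‖P‖ * ‖a‖ * ‖Qᵀ‖ := by
        have := Matrix.l2_opNorm_mul P a
        have := norm_nonneg Qᵀ
        nlinarith
    _ ≤ ‖a‖ := by
        rw [l2norm_transpose]
        nlinarith [norm_nonneg a, norm_nonneg P, norm_nonneg Q,
          mul_le_one₀ hP (norm_nonneg Q) hQ]

lemma norm_fromBlocks_le (a : Matrix (Fin n) (Fin n) ℝ) (b : Matrix (Fin n) (Fin m) ℝ)
    (c : Matrix (Fin m) (Fin n) ℝ) (d : Matrix (Fin m) (Fin m) ℝ) :
    ‖fromBlocks a b c d‖ ≤ ‖a‖ + ‖b‖ + ‖c‖ + ‖d‖ := by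
  rw [blocks_decomp]
  have h1 := sandwich_le (Pl n m) (Pl n m) a norm_Pl_le norm_Pl_le
  have h2 := sandwich_le (Pl n m) (Pr n m) b norm_Pl_le norm_Pr_le
  have h3 := sandwich_le (Pr n m) (Pl n m) c norm_Pr_le norm_Pl_le
  have h4 := sandwich_le (Pr n m) (Pr n m) d norm_Pr_le norm_Pr_le
  have := norm_add_le (Pl n m * a * (Pl n m)ᵀ + Pl n m * b * (Pr n m)ᵀ + Pr n m * c * (Pl n m)ᵀ)
    (Pr n m * d * (Pr n m)ᵀ)
  have := norm_add_le (Pl n m * a * (Pl n m)ᵀ + Pl n m * b * (Pr n m)ᵀ) (Pr n m * c * (Pl n m)ᵀ)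
  have := norm_add_le (Pl n m * a * (Pl n m)ᵀ) (Pl n m * b * (Pr n m)ᵀ)
  linarith

lemma MEG_diff (α γ : ℝ) (A B : Matrix (Fin n) (Fin m) ℝ) :
    MEG α γ (A + B) - MEG α γ A =
      fromBlocks ((-(α * γ)) • (A * Bᵀ + B * Aᵀ + B * Bᵀ)) ((-α) • B) (α • Bᵀ)
        ((-(α * γ)) • (Aᵀ * B + Bᵀ * A + Bᵀ * B)) := by
  have h1 : (A + B) * (A + B)ᵀ = A * Aᵀ + (A * Bᵀ + B * Aᵀ + B * Bᵀ) := by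
    rw [transpose_add, Matrix.add_mul, Matrix.mul_add, Matrix.mul_add]; abel
  have h2 : (A + B)ᵀ * (A + B) = Aᵀ * A + (Aᵀ * B + Bᵀ * A + Bᵀ * B) := by
    rw [transpose_add, Matrix.mul_add, Matrix.add_mul, Matrix.add_mul]; abel
  unfold MEG
  rw [h1, h2, transpose_add, sub_eq_add_neg, Matrix.fromBlocks_neg, Matrix.fromBlocks_add]
  refine Matrix.fromBlocks_inj.mpr ⟨by module, by module, by module, by module⟩

lemma MEG_diff_norm_le (α γ : ℝ) (hα : 0 < α) (hγ : 0 < γ) (A B : Matrix (Fin n) (Fin m) ℝ) :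
    ‖MEG α γ (A + B) - MEG α γ A‖ ≤ α * (2 * γ * (2 * ‖A‖ + ‖B‖) + 2) * ‖B‖ := by
  rw [MEG_diff]
  have key := norm_fromBlocks_le ((-(α * γ)) • (A * Bᵀ + B * Aᵀ + B * Bᵀ)) ((-α) • B) (α • Bᵀ)
    ((-(α * γ)) • (Aᵀ * B + Bᵀ * A + Bᵀ * B))
  have hTL : ‖(-(α * γ)) • (A * Bᵀ + B * Aᵀ + B * Bᵀ)‖ ≤ α * γ * (2 * ‖A‖ * ‖B‖ + ‖B‖ * ‖B‖) := by
    rw [norm_smul]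
    have e1 : ‖A * Bᵀ + B * Aᵀ + B * Bᵀ‖ ≤ 2 * ‖A‖ * ‖B‖ + ‖B‖ * ‖B‖ := by
      have := norm_add_le (A * Bᵀ + B * Aᵀ) (B * Bᵀ)
      have := norm_add_le (A * Bᵀ) (B * Aᵀ)
      have := Matrix.l2_opNorm_mul A Bᵀ
      have := Matrix.l2_opNorm_mul B Aᵀ
      have := Matrix.l2_opNorm_mul B Bᵀ
      rw [l2norm_transpose A, l2norm_transpose B] at *
      linarith
    have : ‖(-(α * γ))‖ = α * γ := by
      rw [Real.norm_eq_abs, abs_neg, abs_of_pos (by positivity)]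
    rw [this]
    have hm := mul_le_mul_of_nonneg_left e1 (by positivity : (0:ℝ) ≤ α * γ)
    linarith
  have hBR : ‖(-(α * γ)) • (Aᵀ * B + Bᵀ * A + Bᵀ * B)‖ ≤ α * γ * (2 * ‖A‖ * ‖B‖ + ‖B‖ * ‖B‖) := by
    rw [norm_smul]
    have e1 : ‖Aᵀ * B + Bᵀ * A + Bᵀ * B‖ ≤ 2 * ‖A‖ * ‖B‖ + ‖B‖ * ‖B‖ := by
      have := norm_add_le (Aᵀ * B + Bᵀ * A) (Bᵀ * B)
      have := norm_add_le (Aᵀ * B) (Bᵀ * A)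
      have := Matrix.l2_opNorm_mul Aᵀ B
      have := Matrix.l2_opNorm_mul Bᵀ A
      have := Matrix.l2_opNorm_mul Bᵀ B
      rw [l2norm_transpose A, l2norm_transpose B] at *
      linarith
    have : ‖(-(α * γ))‖ = α * γ := by
      rw [Real.norm_eq_abs, abs_neg, abs_of_pos (by positivity)]
    rw [this]
    have hm := mul_le_mul_of_nonneg_left e1 (by positivity : (0:ℝ) ≤ α * γ)
    linarith
  have hTR : ‖(-α) • B‖ = α * ‖B‖ := by
    rw [norm_smul, Real.norm_eq_abs, abs_neg, abs_of_pos hα]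
  have hBL : ‖α • Bᵀ‖ = α * ‖B‖ := by
    rw [norm_smul, Real.norm_eq_abs, abs_of_pos hα, l2norm_transpose]
  nlinarith [norm_nonneg A, norm_nonneg B]

end Aux

/-- Perturbation bound for EG iterative matrices:
`‖M_EG(A + B) − M_EG(A)‖₂ ≤ α(2γ(2‖A‖₂ + ‖B‖₂) + 2)‖B‖₂`; consequently, if `Σ_t ‖B_t‖₂ < ∞`
then `Σ_t ‖M_EG(A + B_t) − M_EG(A)‖₂ < ∞`. -/
theorem stmt17 {n m : ℕ} (A : Matrix (Fin n) (Fin m) ℝ) (α γ : ℝ) (hα : 0 < α) (hγ : 0 < γ) :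
    (∀ B : Matrix (Fin n) (Fin m) ℝ,
      mnorm2 (MEG α γ (A + B) - MEG α γ A) ≤
        α * (2 * γ * (2 * mnorm2 A + mnorm2 B) + 2) * mnorm2 B) ∧
    (∀ B : ℕ → Matrix (Fin n) (Fin m) ℝ,
      Summable (fun t => mnorm2 (B t)) →
      Summable (fun t => mnorm2 (MEG α γ (A + B t) - MEG α γ A))) := by
  open scoped Matrix.Norms.L2Operator in
  constructor
  · intro B
    simp only [mnorm2_eq]
    exact MEG_diff_norm_le α γ hα hγ A B
  · intro B hB
    set K := ∑' t, mnorm2 (B t) with hK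
    have hnn : ∀ t, 0 ≤ mnorm2 (B t) := fun t => by rw [mnorm2_eq]; exact norm_nonneg _
    have hle : ∀ t, mnorm2 (B t) ≤ K := fun t => Summable.le_tsum hB t (fun j _ => hnn j)
    apply Summable.of_nonneg_of_le
      (fun t => by rw [mnorm2_eq]; exact norm_nonneg _)
      (fun t => ?_) (hB.mul_left (α * (2 * γ * (2 * mnorm2 A + K) + 2)))
    have h1 : mnorm2 (MEG α γ (A + B t) - MEG α γ A) ≤
        α * (2 * γ * (2 * mnorm2 A + mnorm2 (B t)) + 2) * mnorm2 (B t) := by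
      simp only [mnorm2_eq]
      exact MEG_diff_norm_le α γ hα hγ A (B t)
    have h2 : α * (2 * γ * (2 * mnorm2 A + mnorm2 (B t)) + 2) * mnorm2 (B t) ≤
        α * (2 * γ * (2 * mnorm2 A + K) + 2) * mnorm2 (B t) := by
      have h3 := hnn t
      have h4 := hle t
      have h5 := mul_nonneg (mul_nonneg hα.le hγ.le)
        (mul_nonneg (sub_nonneg.2 h4) h3)
      nlinarith
    linarith
end
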